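/- arXiv:2111.14430 — 5 statements merged into one kernel-verified Lean document; each statement's English description precedes it below -/
import Mathlib

section
/- For every m ≥ 0 and every nonnegative data vector y ∈ ℝ₊^{2m+1}, the function x ↦ I(y‖x*x) attains its minimum over ℝ₊^{m+1}: there exists x⋆ ∈ ℝ₊^{m+1} such that I(y‖x⋆*x⋆) ≤ I(y‖x*x) for all x ∈ ℝ₊^{m+1} (values taken in [0,∞]). -/
open Finset Filter

/-- Extension of `x : Fin (m+1) → ℝ` to `ℕ`, zero outside `[0, m]`. -/
def ext (m : ℕ) (x : Fin (m + 1) → ℝ) (k : ℕ) : ℝ :=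
  if h : k < m + 1 then x ⟨k, h⟩ else 0

/-- Autoconvolution `(x*x)_i = ∑_{j=0}^{i} x_{i-j} x_j`. -/
def aconv (m : ℕ) (x : Fin (m + 1) → ℝ) : Fin (2 * m + 1) → ℝ :=
  fun i => ∑ j ∈ Finset.range (i.1 + 1), ext m x (i.1 - j) * ext m x j

/-- The index `ℓ + j ∈ {0,…,2m}` for `ℓ, j ∈ {0,…,m}`. -/
def idx (m : ℕ) (ℓ j : Fin (m + 1)) : Fin (2 * m + 1) :=
  ⟨ℓ.1 + j.1, by have h1 := ℓ.isLt; have h2 := j.isLt; omega⟩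

/-- One term of the I-divergence, with values in `[0,∞]`, with the conventions
`0·log(0/b) = 0` and value `∞` if `a > 0 = b`. -/
noncomputable def termDiv (a b : ℝ) : ENNReal :=
  if a = 0 then ENNReal.ofReal b
  else if b = 0 then ⊤
  else ENNReal.ofReal (a * Real.log (a / b) - a + b)

/-- `[0,∞]`-valued I-divergence between vectors. -/
noncomputable def Idiv {n : ℕ} (u v : Fin n → ℝ) : ENNReal :=
  ∑ i, termDiv (u i) (v i)

/-- Real-valued I-divergence between vectors (used when the second argument is
positive wherever the first one is). -/
noncomputable def IdivR {n : ℕ} (u v : Fin n → ℝ) : ℝ :=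
  ∑ i, (u i * Real.log (u i / v i) - u i + v i)

/-- `[0,∞]`-valued I-divergence between `(2m+1) × (m+1)` matrices. -/
noncomputable def IdivM (m : ℕ) (M N : Fin (2 * m + 1) → Fin (m + 1) → ℝ) : ENNReal :=
  ∑ i, ∑ j, termDiv (M i j) (N i j)

/-- Real-valued I-divergence between `(2m+1) × (m+1)` matrices. -/
noncomputable def IdivMR (m : ℕ) (M N : Fin (2 * m + 1) → Fin (m + 1) → ℝ) : ℝ :=
  ∑ i, ∑ j, (M i j * Real.log (M i j / N i j) - M i j + N i j)

/-- The set 𝒴: nonnegative matrices supported on `{(i,j) : j ≤ i ≤ j+m}` with row sums `y`. -/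
def calY (m : ℕ) (y : Fin (2 * m + 1) → ℝ) (Y : Fin (2 * m + 1) → Fin (m + 1) → ℝ) : Prop :=
  (∀ i j, 0 ≤ Y i j) ∧
  (∀ (i : Fin (2 * m + 1)) (j : Fin (m + 1)), ¬(j.1 ≤ i.1 ∧ i.1 ≤ j.1 + m) → Y i j = 0) ∧
  (∀ i, ∑ j, Y i j = y i)

/-- The matrix `W(x)` with `W(x)_{ij} = x_{i-j} x_j` on the support and `0` elsewhere. -/
def Wmat (m : ℕ) (x : Fin (m + 1) → ℝ) (i : Fin (2 * m + 1)) (j : Fin (m + 1)) : ℝ :=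
  if h : j.1 ≤ i.1 ∧ i.1 ≤ j.1 + m then x ⟨i.1 - j.1, by omega⟩ * x j else 0

/-- The matrix `Y*(x)` with `Y*(x)_{ij} = (x_{i-j} x_j/(x*x)_i)·y_i` on the support. -/
noncomputable def Ystar (m : ℕ) (y : Fin (2 * m + 1) → ℝ) (x : Fin (m + 1) → ℝ)
    (i : Fin (2 * m + 1)) (j : Fin (m + 1)) : ℝ :=
  if h : j.1 ≤ i.1 ∧ i.1 ≤ j.1 + m then
    x ⟨i.1 - j.1, by omega⟩ * x j / aconv m x i * y i
  else 0

/-- `Ŷ_j = ∑_{i=0}^{m} Y_{i+j,i} + ∑_{i=j}^{j+m} Y_{ij}`. -/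
def Yhat (m : ℕ) (Y : Fin (2 * m + 1) → Fin (m + 1) → ℝ) (j : Fin (m + 1)) : ℝ :=
  (∑ ℓ : Fin (m + 1), Y (idx m ℓ j) ℓ) + ∑ ℓ : Fin (m + 1), Y (idx m ℓ j) j

/-- The algorithm map `T(x)_j = x_j (1/c) ∑_ℓ x_ℓ y_{ℓ+j}/(x*x)_{ℓ+j}`,
with `c = √(∑ y_i)`. -/
noncomputable def Tmap (m : ℕ) (y : Fin (2 * m + 1) → ℝ) (x : Fin (m + 1) → ℝ)
    (j : Fin (m + 1)) : ℝ :=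
  x j * (1 / Real.sqrt (∑ i, y i)) * ∑ ℓ, x ℓ * y (idx m ℓ j) / aconv m x (idx m ℓ j)

/-- The gradient `∇_j I(x) = 2 ∑_ℓ ( x_ℓ − x_ℓ y_{ℓ+j}/(x*x)_{ℓ+j} )`. -/
noncomputable def gradI (m : ℕ) (y : Fin (2 * m + 1) → ℝ) (x : Fin (m + 1) → ℝ)
    (j : Fin (m + 1)) : ℝ :=
  2 * ∑ ℓ, (x ℓ - x ℓ * y (idx m ℓ j) / aconv m x (idx m ℓ j))


open Topology

/-!
`x ↦ I(y‖x*x)` is continuous as a `[0,∞]`-valued map on `ℝ^{m+1}`: a term `I(a‖b)` with `a > 0`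
tends to `∞` as `b → 0`, which is its value at `0`. It is also coercive on the closed orthant:
`(x*x)_{2j} ≥ x_j²` for the largest coordinate `x_j = ‖x‖`, and `I(a‖b) ≥ b/2 - a`, so the
divergence is at least `‖x‖²/2 - ∑ y_i`. Since it is finite at `x = 1`, the extreme value theorem
on the orthant gives a minimizer.
-/

lemma ext_nonneg {m : ℕ} {x : Fin (m + 1) → ℝ} (hx : 0 ≤ x) (k : ℕ) :
    0 ≤ _root_.ext m x k := by
  unfold _root_.ext
  split_ifs
  exacts [hx _, le_rfl]

lemma continuous_ext (m k : ℕ) : Continuous fun x : Fin (m + 1) → ℝ => _root_.ext m x k := by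
  unfold _root_.ext
  split_ifs
  exacts [continuous_apply _, continuous_const]

lemma continuous_aconv (m : ℕ) : Continuous (aconv m) :=
  continuous_pi fun _ => continuous_finsetSum _ fun _ _ =>
    (continuous_ext m _).mul (continuous_ext m _)

lemma aconv_pos {m : ℕ} {x : Fin (m + 1) → ℝ} (hx : ∀ j, 0 < x j) (i : Fin (2 * m + 1)) :
    0 < aconv m x i := by
  have hi := i.isLt
  refine Finset.sum_pos' (fun k _ => mul_nonneg (ext_nonneg (fun j => (hx j).le) _)
    (ext_nonneg (fun j => (hx j).le) _)) ⟨min i m, by simp, ?_⟩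
  simp only [_root_.ext, dif_pos (show i.1 - min i.1 m < m + 1 by omega),
    dif_pos (show min i.1 m < m + 1 by omega)]
  exact mul_pos (hx _) (hx _)

lemma aconv_nonneg {m : ℕ} {x : Fin (m + 1) → ℝ} (hx : 0 ≤ x) : 0 ≤ aconv m x := fun _ =>
  Finset.sum_nonneg fun _ _ => mul_nonneg (ext_nonneg hx _) (ext_nonneg hx _)

lemma sq_le_aconv_idx_self {m : ℕ} {x : Fin (m + 1) → ℝ} (hx : 0 ≤ x) (j : Fin (m + 1)) :
    x j ^ 2 ≤ aconv m x (idx m j j) := by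
  have hterm : _root_.ext m x ((idx m j j).1 - j.1) * _root_.ext m x j.1 = x j ^ 2 := by
    simp [idx, _root_.ext, sq, Nat.lt_succ_iff.1 j.isLt]
  rw [← hterm]
  exact Finset.single_le_sum (f := fun k => _root_.ext m x ((idx m j j).1 - k) * _root_.ext m x k)
    (fun k _ => mul_nonneg (ext_nonneg hx _) (ext_nonneg hx _)) (by simp [idx])

lemma exists_norm_sq_le_aconv {m : ℕ} {x : Fin (m + 1) → ℝ} (hx : 0 ≤ x) :
    ∃ i, ‖x‖ ^ 2 ≤ aconv m x i := by
  obtain ⟨j, hj⟩ := Finite.exists_max x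
  have hnorm : ‖x‖ ≤ x j := (pi_norm_le_iff_of_nonneg (hx j)).2 fun i => by
    rw [Real.norm_of_nonneg (hx i)]; exact hj i
  exact ⟨idx m j j, (pow_le_pow_left₀ (norm_nonneg x) hnorm 2).trans (sq_le_aconv_idx_self hx j)⟩

lemma termDiv_of_ne_zero {a b : ℝ} (ha : a ≠ 0) (hb : b ≠ 0) :
    termDiv a b = ENNReal.ofReal (a * Real.log (a / b) - a + b) := by
  rw [termDiv, if_neg ha, if_neg hb]

lemma termDiv_ne_top (a : ℝ) {b : ℝ} (hb : b ≠ 0) : termDiv a b ≠ ⊤ := by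
  unfold termDiv
  split_ifs <;> exact ENNReal.ofReal_ne_top

lemma tendsto_termDiv_nhdsNE_zero {a : ℝ} (ha : 0 < a) :
    Tendsto (termDiv a) (𝓝[≠] 0) (𝓝 ⊤) := by
  have hlog : Tendsto (fun b => a * Real.log (a / b) - a + b) (𝓝[≠] 0) atTop := by
    have hneg : Tendsto (fun b => -(a * Real.log b)) (𝓝[≠] 0) atTop :=
      tendsto_neg_atBot_atTop.comp (Real.tendsto_log_nhdsNE_zero.const_mul_atBot ha)
    have hrest : Tendsto (fun b => a * Real.log a - a + b) (𝓝[≠] 0) (𝓝 (a * Real.log a - a + 0)) :=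
      tendsto_const_nhds.add (tendsto_id.mono_left nhdsWithin_le_nhds)
    refine (hneg.atTop_add hrest).congr' ?_
    filter_upwards [self_mem_nhdsWithin] with b hb
    rw [Real.log_div ha.ne' hb]
    ring
  refine (ENNReal.tendsto_ofReal_atTop.comp hlog).congr' ?_
  filter_upwards [self_mem_nhdsWithin] with b hb
  exact (termDiv_of_ne_zero ha.ne' hb).symm

lemma continuous_termDiv {a : ℝ} (ha : 0 ≤ a) : Continuous (termDiv a) := by
  rcases ha.eq_or_lt with rfl | ha
  · exact (funext fun b => if_pos rfl : termDiv 0 = ENNReal.ofReal) ▸ ENNReal.continuous_ofReal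
  refine continuous_iff_continuousAt.2 fun b => ?_
  rcases eq_or_ne b 0 with rfl | hb
  · rw [← continuousWithinAt_compl_self, ContinuousWithinAt, termDiv, if_neg ha.ne', if_pos rfl]
    exact tendsto_termDiv_nhdsNE_zero ha
  · have heq : (fun b => ENNReal.ofReal (a * Real.log (a / b) - a + b)) =ᶠ[𝓝 b] termDiv a := by
      filter_upwards [eventually_ne_nhds hb] with c hc
      exact (termDiv_of_ne_zero ha.ne' hc).symm
    refine ContinuousAt.congr ?_ heq
    have : a / b ≠ 0 := div_ne_zero ha.ne' hb
    exact ENNReal.continuous_ofReal.continuousAt.comp (by fun_prop (disch := assumption))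

lemma ofReal_half_sub_le_termDiv {a b : ℝ} (ha : 0 ≤ a) (hb : 0 ≤ b) :
    ENNReal.ofReal (b / 2 - a) ≤ termDiv a b := by
  rcases ha.eq_or_lt with rfl | ha
  · rw [termDiv, if_pos rfl]
    exact ENNReal.ofReal_le_ofReal (by linarith)
  rcases hb.eq_or_lt with rfl | hb
  · simp [termDiv, ha.ne']
  rw [termDiv_of_ne_zero ha.ne' hb.ne']
  refine ENNReal.ofReal_le_ofReal ?_
  -- `log (2a/b) ≥ 1 - b/(2a)` (the tangent of `log` at `2`), and `log 2 < 1`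
  have htan := Real.one_sub_inv_le_log_of_pos (show 0 < 2 * a / b by positivity)
  have hsplit : Real.log (2 * a / b) = Real.log 2 + Real.log (a / b) := by
    rw [mul_div_assoc, Real.log_mul two_ne_zero (by positivity)]
  have hinv : (2 * a / b)⁻¹ * a = b / 2 := by field_simp
  nlinarith [Real.log_two_lt_d9]

lemma termDiv_le_Idiv {n : ℕ} (u v : Fin n → ℝ) (i : Fin n) :
    termDiv (u i) (v i) ≤ Idiv u v :=
  Finset.single_le_sum (f := fun i => termDiv (u i) (v i)) (fun _ _ => zero_le)
    (Finset.mem_univ i)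

lemma Idiv_lt_top {n : ℕ} (u : Fin n → ℝ) {v : Fin n → ℝ} (hv : ∀ i, v i ≠ 0) :
    Idiv u v < ⊤ :=
  ENNReal.sum_lt_top.2 fun i _ => (termDiv_ne_top _ (hv i)).lt_top

lemma continuous_Idiv {n : ℕ} {u : Fin n → ℝ} (hu : 0 ≤ u) : Continuous (Idiv u) :=
  continuous_finsetSum _ fun i _ => (continuous_termDiv (hu i)).comp (continuous_apply i)

lemma ofReal_norm_sq_le_Idiv_aconv (m : ℕ) {y : Fin (2 * m + 1) → ℝ} (hy : 0 ≤ y)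
    {x : Fin (m + 1) → ℝ} (hx : 0 ≤ x) :
    ENNReal.ofReal (‖x‖ ^ 2 / 2 - ∑ i, y i) ≤ Idiv y (aconv m x) := by
  obtain ⟨i, hi⟩ := exists_norm_sq_le_aconv hx
  calc ENNReal.ofReal (‖x‖ ^ 2 / 2 - ∑ i, y i)
      ≤ ENNReal.ofReal (aconv m x i / 2 - y i) := by
        gcongr
        exact Finset.single_le_sum (fun i _ => hy i) (Finset.mem_univ i)
    _ ≤ termDiv (y i) (aconv m x i) :=
        ofReal_half_sub_le_termDiv (hy i) (aconv_nonneg hx i)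
    _ ≤ Idiv y (aconv m x) := termDiv_le_Idiv _ _ i

lemma tendsto_Idiv_aconv_cocompact (m : ℕ) {y : Fin (2 * m + 1) → ℝ} (hy : 0 ≤ y) :
    Tendsto (fun x => Idiv y (aconv m x)) (cocompact _ ⊓ 𝓟 (Set.Ici 0)) (𝓝 ⊤) := by
  have hnorm : Tendsto (fun x : Fin (m + 1) → ℝ => ‖x‖ ^ 2 / 2 - ∑ i, y i)
      (cocompact _ ⊓ 𝓟 (Set.Ici 0)) atTop :=
    tendsto_atTop_add_const_right _ _ (((tendsto_pow_atTop two_ne_zero).comp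
      (tendsto_norm_cocompact_atTop.mono_left inf_le_left)).atTop_div_const two_pos)
  refine tendsto_nhds_top_mono (ENNReal.tendsto_ofReal_atTop.comp hnorm) ?_
  exact mem_inf_of_right fun x hx => ofReal_norm_sq_le_Idiv_aconv m hy hx

/-- existence of a minimizer of `x ↦ I(y‖x*x)` over `ℝ₊^{m+1}`. -/
theorem stmt0 (m : ℕ) (y : Fin (2 * m + 1) → ℝ) (hy : ∀ i, 0 ≤ y i) :
    ∃ xs : Fin (m + 1) → ℝ, (∀ j, 0 ≤ xs j) ∧
      ∀ x : Fin (m + 1) → ℝ, (∀ j, 0 ≤ x j) →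
        Idiv y (aconv m xs) ≤ Idiv y (aconv m x) := by
  have hone : Idiv y (aconv m 1) < ⊤ :=
    Idiv_lt_top y fun i => (aconv_pos (fun _ => one_pos) i).ne'
  have hcoercive := (tendsto_Idiv_aconv_cocompact m hy).eventually (lt_mem_nhds hone)
  have hcont := (continuous_Idiv hy).comp (continuous_aconv m)
  obtain ⟨xs, hxs, hmin⟩ := hcont.continuousOn.exists_isMinOn'
    isClosed_Ici (Set.mem_Ici.2 zero_le_one) (hcoercive.mono fun _ => le_of_lt)
  exact ⟨xs, hxs, fun x hx => hmin hx⟩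
end

section
/- Let y ∈ ℝ₊^{2m+1} and let x ∈ ℝ^{m+1} have strictly positive components; set W = W(x). Then for every Y ∈ 𝒴 the Pythagorean identity I(Y‖W) = I(Y‖Y*(x)) + I(Y*(x)‖W) holds; in particular Y*(x) minimizes Y ↦ I(Y‖W) over 𝒴. -/
open Finset Filter

section AuxStmt4

lemma aux_ext_nonneg (m : ℕ) (x : Fin (m+1) → ℝ) (hx : ∀ j, 0 ≤ x j) (k : ℕ) :
    0 ≤ _root_.ext m x k := by
  unfold _root_.ext; split
  · exact hx _
  · exact le_refl 0

lemma aux_aconv_pos (m : ℕ) (x : Fin (m+1) → ℝ) (hx : ∀ j, 0 < x j) (i : Fin (2*m+1)) :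
    0 < aconv m x i := by
  have hi := i.isLt
  unfold aconv
  apply Finset.sum_pos'
  · intro k _
    exact mul_nonneg (aux_ext_nonneg m x (fun j => (hx j).le) _)
      (aux_ext_nonneg m x (fun j => (hx j).le) _)
  · refine ⟨i.1 - min i.1 m, Finset.mem_range.mpr (by omega), ?_⟩
    have h1 : i.1 - (i.1 - min i.1 m) = min i.1 m := by omega
    rw [h1]
    unfold _root_.ext
    rw [dif_pos (by omega), dif_pos (by omega)]
    exact mul_pos (hx _) (hx _)

lemma aux_Wmat_nonneg (m : ℕ) (x : Fin (m+1) → ℝ) (hx : ∀ j, 0 < x j)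
    (i : Fin (2*m+1)) (j : Fin (m+1)) : 0 ≤ Wmat m x i j := by
  unfold Wmat; split
  · exact (mul_pos (hx _) (hx _)).le
  · exact le_refl 0

lemma aux_Wmat_pos (m : ℕ) (x : Fin (m+1) → ℝ) (hx : ∀ j, 0 < x j)
    (i : Fin (2*m+1)) (j : Fin (m+1)) (hs : j.1 ≤ i.1 ∧ i.1 ≤ j.1 + m) :
    0 < Wmat m x i j := by
  unfold Wmat; rw [dif_pos hs]; exact mul_pos (hx _) (hx _)

lemma aux_sumW (m : ℕ) (x : Fin (m+1) → ℝ) (i : Fin (2*m+1)) :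
    ∑ j : Fin (m+1), Wmat m x i j = aconv m x i := by
  have hi := i.isLt
  set F : ℕ → ℝ := fun k => if k ≤ i.1 ∧ i.1 ≤ k + m then _root_.ext m x (i.1 - k) * _root_.ext m x k else 0
    with hF
  have h1 : ∑ j : Fin (m+1), Wmat m x i j = ∑ k ∈ Finset.range (m+1), F k := by
    rw [← Fin.sum_univ_eq_sum_range F (m+1)]
    apply Finset.sum_congr rfl
    intro j _
    by_cases hs : j.1 ≤ i.1 ∧ i.1 ≤ j.1 + m
    · rw [hF]
      simp only [if_pos hs]
      unfold Wmat _root_.ext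
      rw [dif_pos hs, dif_pos (by omega), dif_pos j.isLt]
    · rw [hF]
      simp only [if_neg hs]
      unfold Wmat
      rw [dif_neg hs]
  have h2 : aconv m x i = ∑ k ∈ Finset.range (i.1+1), F k := by
    unfold aconv
    apply Finset.sum_congr rfl
    intro k hk
    rw [Finset.mem_range] at hk
    by_cases hs : k ≤ i.1 ∧ i.1 ≤ k + m
    · rw [hF]; simp only [if_pos hs]
    · rw [hF]; simp only [if_neg hs]
      have h3 : m < i.1 - k := by omega
      unfold _root_.ext
      rw [dif_neg (by omega)]
      ring
  have h3 : ∑ k ∈ Finset.range (m+1), F k = ∑ k ∈ Finset.range (2*m+1), F k := by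
    apply Finset.sum_subset (Finset.range_subset_range.mpr (by omega))
    intro k _ hk
    rw [Finset.mem_range] at hk
    rw [hF]
    by_cases hs : k ≤ i.1 ∧ i.1 ≤ k + m
    · simp only [if_pos hs]
      unfold _root_.ext
      rw [dif_neg (show ¬ (k < m + 1) by omega)]
      ring
    · simp only [if_neg hs]
  have h4 : ∑ k ∈ Finset.range (i.1+1), F k = ∑ k ∈ Finset.range (2*m+1), F k := by
    apply Finset.sum_subset (Finset.range_subset_range.mpr (by omega))
    intro k _ hk
    rw [Finset.mem_range] at hk
    rw [hF]
    simp only [if_neg (show ¬ (k ≤ i.1 ∧ i.1 ≤ k + m) by omega)]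
  rw [h1, h2, h3, h4]

lemma aux_Ystar_eq (m : ℕ) (y : Fin (2*m+1) → ℝ) (x : Fin (m+1) → ℝ)
    (i : Fin (2*m+1)) (j : Fin (m+1)) :
    Ystar m y x i j = Wmat m x i j / aconv m x i * y i := by
  unfold Ystar Wmat
  split
  · rfl
  · simp

lemma aux_sumYstar (m : ℕ) (y : Fin (2*m+1) → ℝ) (x : Fin (m+1) → ℝ)
    (hx : ∀ j, 0 < x j) (i : Fin (2*m+1)) :
    ∑ j : Fin (m+1), Ystar m y x i j = y i := by
  have hA := aux_aconv_pos m x hx i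
  simp only [aux_Ystar_eq]
  rw [← Finset.sum_mul, ← Finset.sum_div, aux_sumW, div_self hA.ne', one_mul]

lemma aux_termDiv_eq (a b : ℝ) (h : b = 0 → a = 0) :
    termDiv a b = ENNReal.ofReal (a * Real.log (a / b) - a + b) := by
  unfold termDiv
  by_cases ha : a = 0
  · subst ha; simp
  · rw [if_neg ha, if_neg (fun hb => ha (h hb))]

lemma aux_f_nonneg (a b : ℝ) (ha : 0 ≤ a) (hb : 0 ≤ b) (h : b = 0 → a = 0) :
    0 ≤ a * Real.log (a / b) - a + b := by
  rcases eq_or_lt_of_le ha with h0 | h0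
  · simp [← h0, hb]
  · have hbpos : 0 < b := lt_of_le_of_ne hb (fun hb0 => h0.ne' (h hb0.symm))
    have h2 : Real.log (b / a) ≤ b / a - 1 := Real.log_le_sub_one_of_pos (by positivity)
    rw [Real.log_div (ne_of_gt h0) hbpos.ne']
    rw [Real.log_div hbpos.ne' (ne_of_gt h0)] at h2
    have hab : a * (b / a) = b := by field_simp
    nlinarith [mul_le_mul_of_nonneg_left h2 ha]

lemma aux_flem (a b c : ℝ) (ha : 0 ≤ a) (hb : 0 < b) (hc : 0 < c) :
    a * Real.log (a / c) - a + c =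
      (a * Real.log (a / b) - a + b) + (b * Real.log (b / c) - b + c) +
        (a - b) * (Real.log b - Real.log c) := by
  rw [Real.log_div hb.ne' hc.ne']
  rcases eq_or_lt_of_le ha with h0 | h0
  · simp [← h0]; ring
  · rw [Real.log_div h0.ne' hc.ne', Real.log_div h0.ne' hb.ne']; ring

end AuxStmt4

/-- Pythagorean identity for the partial minimization over 𝒴, and
the minimizing property of `Y*(x)`. -/
theorem stmt4 (m : ℕ) (y : Fin (2 * m + 1) → ℝ) (hy : ∀ i, 0 ≤ y i)
    (x : Fin (m + 1) → ℝ) (hx : ∀ j, 0 < x j) :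
    (∀ Y : Fin (2 * m + 1) → Fin (m + 1) → ℝ, calY m y Y →
      IdivM m Y (Wmat m x) =
        IdivM m Y (Ystar m y x) + IdivM m (Ystar m y x) (Wmat m x)) ∧
    (∀ Y : Fin (2 * m + 1) → Fin (m + 1) → ℝ, calY m y Y →
      IdivM m (Ystar m y x) (Wmat m x) ≤ IdivM m Y (Wmat m x)) := by
  have key : ∀ Y : Fin (2 * m + 1) → Fin (m + 1) → ℝ, calY m y Y →
      IdivM m Y (Wmat m x) =
        IdivM m Y (Ystar m y x) + IdivM m (Ystar m y x) (Wmat m x) := by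
    intro Y hY
    obtain ⟨hpos, hsupp, hsum⟩ := hY
    unfold IdivM
    rw [← Finset.sum_add_distrib]
    apply Finset.sum_congr rfl
    intro i _
    have hA : 0 < aconv m x i := aux_aconv_pos m x hx i
    -- zero-row fact
    have hzero : y i = 0 → ∀ j, Y i j = 0 := by
      intro h0 j
      have hs := hsum i
      rw [h0] at hs
      have := (Finset.sum_eq_zero_iff_of_nonneg (fun j _ => hpos i j)).mp hs
      exact this j (Finset.mem_univ j)
    -- nonnegativity / vanishing facts per entry
    have hWnn : ∀ j, 0 ≤ Wmat m x i j := fun j => aux_Wmat_nonneg m x hx i j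
    have hYsnn : ∀ j : Fin (m+1), 0 ≤ Ystar m y x i j := by
      intro j
      rw [aux_Ystar_eq]
      exact mul_nonneg (div_nonneg (hWnn j) hA.le) (hy i)
    have hW0 : ∀ j : Fin (m+1), Wmat m x i j = 0 → Y i j = 0 := by
      intro j h0
      by_cases hs : j.1 ≤ i.1 ∧ i.1 ≤ j.1 + m
      · exact absurd h0 (aux_Wmat_pos m x hx i j hs).ne'
      · exact hsupp i j hs
    have hW0' : ∀ j : Fin (m+1), Wmat m x i j = 0 → Ystar m y x i j = 0 := by
      intro j h0
      rw [aux_Ystar_eq, h0, zero_div, zero_mul]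
    have hYs0 : ∀ j : Fin (m+1), Ystar m y x i j = 0 → Y i j = 0 := by
      intro j h0
      rw [aux_Ystar_eq] at h0
      rcases mul_eq_zero.mp h0 with h1 | h1
      · rcases div_eq_zero_iff.mp h1 with h2 | h2
        · exact hW0 j h2
        · exact absurd h2 hA.ne'
      · exact hzero h1 j
    -- the three termDiv sums as ofReal of real sums
    have e1 : ∀ j : Fin (m+1), termDiv (Y i j) (Wmat m x i j) =
        ENNReal.ofReal (Y i j * Real.log (Y i j / Wmat m x i j) - Y i j + Wmat m x i j) :=
      fun j => aux_termDiv_eq _ _ (hW0 j)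
    have e2 : ∀ j : Fin (m+1), termDiv (Y i j) (Ystar m y x i j) =
        ENNReal.ofReal (Y i j * Real.log (Y i j / Ystar m y x i j) - Y i j + Ystar m y x i j) :=
      fun j => aux_termDiv_eq _ _ (hYs0 j)
    have e3 : ∀ j : Fin (m+1), termDiv (Ystar m y x i j) (Wmat m x i j) =
        ENNReal.ofReal (Ystar m y x i j * Real.log (Ystar m y x i j / Wmat m x i j)
          - Ystar m y x i j + Wmat m x i j) :=
      fun j => aux_termDiv_eq _ _ (hW0' j)
    have n1 : ∀ j ∈ Finset.univ, (0:ℝ) ≤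
        Y i j * Real.log (Y i j / Wmat m x i j) - Y i j + Wmat m x i j :=
      fun j _ => aux_f_nonneg _ _ (hpos i j) (hWnn j) (hW0 j)
    have n2 : ∀ j ∈ Finset.univ, (0:ℝ) ≤
        Y i j * Real.log (Y i j / Ystar m y x i j) - Y i j + Ystar m y x i j :=
      fun j _ => aux_f_nonneg _ _ (hpos i j) (hYsnn j) (hYs0 j)
    have n3 : ∀ j ∈ Finset.univ, (0:ℝ) ≤
        Ystar m y x i j * Real.log (Ystar m y x i j / Wmat m x i j)
          - Ystar m y x i j + Wmat m x i j :=
      fun j _ => aux_f_nonneg _ _ (hYsnn j) (hWnn j) (hW0' j)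
    rw [Finset.sum_congr rfl (fun j _ => e1 j), Finset.sum_congr rfl (fun j _ => e2 j),
      Finset.sum_congr rfl (fun j _ => e3 j),
      ← ENNReal.ofReal_sum_of_nonneg n1, ← ENNReal.ofReal_sum_of_nonneg n2,
      ← ENNReal.ofReal_sum_of_nonneg n3,
      ← ENNReal.ofReal_add (Finset.sum_nonneg n2) (Finset.sum_nonneg n3)]
    congr 1
    -- the real identity
    set C : ℝ := Real.log (y i) - Real.log (aconv m x i) with hC
    have hterm : ∀ j : Fin (m+1),
        Y i j * Real.log (Y i j / Wmat m x i j) - Y i j + Wmat m x i j =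
        (Y i j * Real.log (Y i j / Ystar m y x i j) - Y i j + Ystar m y x i j) +
        (Ystar m y x i j * Real.log (Ystar m y x i j / Wmat m x i j)
          - Ystar m y x i j + Wmat m x i j) + (Y i j - Ystar m y x i j) * C := by
      intro j
      by_cases hs : j.1 ≤ i.1 ∧ i.1 ≤ j.1 + m
      · have hWp : 0 < Wmat m x i j := aux_Wmat_pos m x hx i j hs
        rcases eq_or_lt_of_le (hy i) with hyi | hyi
        · have hY0 : Y i j = 0 := hzero hyi.symm j
          have hYs0' : Ystar m y x i j = 0 := by
            rw [aux_Ystar_eq, ← hyi, mul_zero]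
          rw [hY0, hYs0']
          simp
        · have hYsp : 0 < Ystar m y x i j := by
            rw [aux_Ystar_eq]
            exact mul_pos (div_pos hWp hA) hyi
          have hlog : Real.log (Ystar m y x i j) - Real.log (Wmat m x i j) = C := by
            rw [aux_Ystar_eq, Real.log_mul (by positivity) hyi.ne',
              Real.log_div hWp.ne' hA.ne', hC]
            ring
          rw [← hlog]
          exact aux_flem _ _ _ (hpos i j) hYsp hWp
      · have hY0 : Y i j = 0 := hsupp i j hs
        have hW0'' : Wmat m x i j = 0 := by unfold Wmat; rw [dif_neg hs]
        have hYs0' : Ystar m y x i j = 0 := hW0' j hW0''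
        rw [hY0, hW0'', hYs0']
        simp
    rw [Finset.sum_congr rfl (fun j _ => hterm j), Finset.sum_add_distrib,
      Finset.sum_add_distrib, ← Finset.sum_mul, Finset.sum_sub_distrib,
      hsum i, aux_sumYstar m y x hx i, sub_self, zero_mul, add_zero]
  refine ⟨key, fun Y hY => ?_⟩
  rw [key Y hY]
  exact le_add_self
end

section
/- Let y ∈ ℝ₊^{2m+1} with Σ_{i=0}^{2m} y_i > 0 and let Y ∈ 𝒴 have strictly positive entries on the support {(i,j) : j ≤ i ≤ j+m}. Define x⋆_j = Ŷ_j/(2√(Σ_{i=0}^{2m} y_i)) for j = 0,…,m and W⋆ = W(x⋆). Then for every strictly positive x ∈ ℝ₊^{m+1} the Pythagorean identity I(Y‖W(x)) = I(Y‖W⋆) + I(W⋆‖W(x)) holds; in particular W⋆ minimizes W ↦ I(Y‖W) over 𝒲 = {W(x) : x ∈ ℝ₊^{m+1}}. -/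
open Finset Filter

/-!
Along the band write `i = ℓ + j`. Since `W(x)_{ℓ+j, j} = x_ℓ x_j`, the log-ratio
`log (W⋆/W(x))` splits as `g_ℓ + g_j` with `g = log (x⋆/x)`, so pairing it with any band matrix
`M` gives `∑_j Ŷ(M)_j g_j`. The excess `I(Y‖W(x)) − I(Y‖W⋆) − I(W⋆‖W(x))` is exactly such a pairing
with `M = Y − W⋆`, and it vanishes because `x⋆` is chosen so that `Ŷ(W⋆) = Ŷ(Y)`
(using `∑_j x⋆_j = √(∑ y_i)`). Minimality follows, since `I(Y‖W(x)) = ∞` as soon as some `x_j = 0`.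
-/

def BandSupported (m : ℕ) (M : Fin (2 * m + 1) → Fin (m + 1) → ℝ) : Prop :=
  ∀ i j, ¬(j.1 ≤ i.1 ∧ i.1 ≤ j.1 + m) → M i j = 0

section Band

variable {m : ℕ}

lemma idx_comm (ℓ j : Fin (m + 1)) : idx m ℓ j = idx m j ℓ :=
  Fin.ext (Nat.add_comm _ _)

lemma idx_mem_band (ℓ j : Fin (m + 1)) : j.1 ≤ (idx m ℓ j).1 ∧ (idx m ℓ j).1 ≤ j.1 + m := by
  simp only [idx]; omega

lemma Wmat_idx (x : Fin (m + 1) → ℝ) (ℓ j : Fin (m + 1)) :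
    Wmat m x (idx m ℓ j) j = x ℓ * x j := by
  rw [Wmat, dif_pos (idx_mem_band ℓ j)]
  congr 2
  exact Fin.ext (by simp [idx])

lemma bandSupported_Wmat (x : Fin (m + 1) → ℝ) : BandSupported m (Wmat m x) :=
  fun _ _ h => dif_neg h

lemma Wmat_nonneg {x : Fin (m + 1) → ℝ} (hx : ∀ j, 0 ≤ x j) (i j) : 0 ≤ Wmat m x i j := by
  unfold Wmat
  split
  · exact mul_nonneg (hx _) (hx _)
  · exact le_rfl

lemma Wmat_pos {x : Fin (m + 1) → ℝ} (hx : ∀ j, 0 < x j) {i j}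
    (h : j.1 ≤ i.1 ∧ i.1 ≤ j.1 + m) : 0 < Wmat m x i j := by
  rw [Wmat, dif_pos h]
  exact mul_pos (hx _) (hx _)

lemma BandSupported.eq_zero_or_Wmat_pos {M : Fin (2 * m + 1) → Fin (m + 1) → ℝ}
    (hM : BandSupported m M) {x : Fin (m + 1) → ℝ} (hx : ∀ j, 0 < x j) (i j) :
    M i j = 0 ∨ 0 < Wmat m x i j := by
  by_cases h : j.1 ≤ i.1 ∧ i.1 ≤ j.1 + m
  · exact Or.inr (Wmat_pos hx h)
  · exact Or.inl (hM i j h)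

lemma BandSupported.sum_eq_sum_idx {F : Fin (2 * m + 1) → Fin (m + 1) → ℝ}
    (hF : BandSupported m F) : ∑ i, ∑ j, F i j = ∑ j, ∑ ℓ, F (idx m ℓ j) j := by
  rw [Finset.sum_comm]
  refine Finset.sum_congr rfl fun j _ => (Fintype.sum_of_injective (fun ℓ => idx m ℓ j) ?_ _ _
    (fun i hi => hF i j fun hband => hi ⟨⟨i.1 - j.1, by omega⟩, Fin.ext ?_⟩) fun _ => rfl).symm
  · intro ℓ ℓ' h
    exact Fin.ext (by simpa [idx] using congrArg Fin.val h)
  · simp only [idx]; omega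

lemma BandSupported.sum_mul_eq_sum_Yhat_mul {M : Fin (2 * m + 1) → Fin (m + 1) → ℝ}
    (hM : BandSupported m M) (L : Fin (2 * m + 1) → Fin (m + 1) → ℝ) (g : Fin (m + 1) → ℝ)
    (hL : ∀ ℓ j, L (idx m ℓ j) j = g ℓ + g j) :
    ∑ i, ∑ j, M i j * L i j = ∑ j, Yhat m M j * g j := by
  have hML : BandSupported m fun i j => M i j * L i j := fun i j h => by simp [hM i j h]
  calc ∑ i, ∑ j, M i j * L i j
      = (∑ j, ∑ ℓ, M (idx m ℓ j) j * g ℓ) + ∑ j, ∑ ℓ, M (idx m ℓ j) j * g j := by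
        simp only [hML.sum_eq_sum_idx, hL, mul_add, Finset.sum_add_distrib]
    _ = (∑ j, ∑ ℓ, M (idx m j ℓ) ℓ * g j) + ∑ j, ∑ ℓ, M (idx m ℓ j) j * g j := by
        rw [Finset.sum_comm]
    _ = ∑ j, Yhat m M j * g j := by
        simp only [Yhat, idx_comm, add_mul, Finset.sum_mul, Finset.sum_add_distrib]

lemma BandSupported.sum_Yhat {M : Fin (2 * m + 1) → Fin (m + 1) → ℝ} (hM : BandSupported m M) :
    ∑ j, Yhat m M j = 2 * ∑ i, ∑ j, M i j := by
  have h := hM.sum_mul_eq_sum_Yhat_mul (fun _ _ => 1) (fun _ => 1 / 2) fun _ _ => by norm_num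
  simp only [mul_one] at h
  rw [h, ← Finset.sum_mul]
  ring

lemma Yhat_sub (M N : Fin (2 * m + 1) → Fin (m + 1) → ℝ) (j : Fin (m + 1)) :
    Yhat m (M - N) j = Yhat m M j - Yhat m N j := by
  simp only [Yhat, Pi.sub_apply, Finset.sum_sub_distrib]
  ring

lemma Yhat_Wmat (x : Fin (m + 1) → ℝ) (j : Fin (m + 1)) :
    Yhat m (Wmat m x) j = 2 * x j * ∑ ℓ, x ℓ := by
  have hrow : ∀ ℓ, Wmat m x (idx m ℓ j) ℓ = x j * x ℓ := fun ℓ => by rw [idx_comm, Wmat_idx]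
  simp only [Yhat, hrow, Wmat_idx, ← Finset.mul_sum, ← Finset.sum_mul]
  ring

lemma Yhat_pos {M : Fin (2 * m + 1) → Fin (m + 1) → ℝ}
    (hM : ∀ i j, j.1 ≤ i.1 ∧ i.1 ≤ j.1 + m → 0 < M i j) (j : Fin (m + 1)) : 0 < Yhat m M j := by
  refine add_pos (Finset.sum_pos (fun ℓ _ => hM _ _ ?_) Finset.univ_nonempty)
    (Finset.sum_pos (fun ℓ _ => hM _ _ (idx_mem_band ℓ j)) Finset.univ_nonempty)
  rw [idx_comm]
  exact idx_mem_band j ℓ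

end Band

section Divergence

lemma mul_log_div_sub_add_nonneg {a b : ℝ} (ha : 0 ≤ a) (hb : 0 ≤ b) (h : a = 0 ∨ 0 < b) :
    0 ≤ a * Real.log (a / b) - a + b := by
  rcases h with rfl | hb
  · simpa using hb
  · have hkl : b * InformationTheory.klFun (a / b) = a * Real.log (a / b) - a + b := by
      rw [InformationTheory.klFun]
      field_simp
      ring
    exact hkl ▸ mul_nonneg hb.le (InformationTheory.klFun_nonneg (div_nonneg ha hb.le))

lemma termDiv_eq_ofReal {a b : ℝ} (h : a = 0 ∨ 0 < b) :
    termDiv a b = ENNReal.ofReal (a * Real.log (a / b) - a + b) := by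
  rcases h with rfl | hb
  · simp [termDiv]
  · by_cases ha : a = 0
    · simp [termDiv, ha]
    · simp [termDiv, ha, hb.ne']

lemma mul_log_div_three_point (a : ℝ) {b c : ℝ} (hb : b ≠ 0) (hc : c ≠ 0) :
    (a * Real.log (a / c) - a + c) - (a * Real.log (a / b) - a + b) - (b * Real.log (b / c) - b + c)
      = (a - b) * Real.log (b / c) := by
  rcases eq_or_ne a 0 with rfl | ha
  · simp only [zero_mul, zero_sub, sub_zero]
    ring
  · rw [Real.log_div ha hc, Real.log_div ha hb, Real.log_div hb hc]
    ring

variable {m : ℕ} {M N : Fin (2 * m + 1) → Fin (m + 1) → ℝ}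

lemma IdivMR_nonneg (hM : ∀ i j, 0 ≤ M i j) (hN : ∀ i j, 0 ≤ N i j)
    (h : ∀ i j, M i j = 0 ∨ 0 < N i j) : 0 ≤ IdivMR m M N :=
  Finset.sum_nonneg fun i _ => Finset.sum_nonneg fun j _ =>
    mul_log_div_sub_add_nonneg (hM i j) (hN i j) (h i j)

lemma IdivM_eq_ofReal_IdivMR (hM : ∀ i j, 0 ≤ M i j) (hN : ∀ i j, 0 ≤ N i j)
    (h : ∀ i j, M i j = 0 ∨ 0 < N i j) : IdivM m M N = ENNReal.ofReal (IdivMR m M N) := by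
  have hterm i j := mul_log_div_sub_add_nonneg (hM i j) (hN i j) (h i j)
  rw [IdivMR, ENNReal.ofReal_sum_of_nonneg fun i _ => Finset.sum_nonneg fun j _ => hterm i j]
  refine Finset.sum_congr rfl fun i _ => ?_
  rw [ENNReal.ofReal_sum_of_nonneg fun j _ => hterm i j]
  exact Finset.sum_congr rfl fun j _ => termDiv_eq_ofReal (h i j)

lemma IdivM_Wmat_eq_top {x : Fin (m + 1) → ℝ} {i : Fin (2 * m + 1)} {j : Fin (m + 1)}
    (hij : j.1 ≤ i.1 ∧ i.1 ≤ j.1 + m) (hM : 0 < M i j) (hxj : x j = 0) :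
    IdivM m M (Wmat m x) = ⊤ := by
  have hW : Wmat m x i j = 0 := by rw [Wmat, dif_pos hij, hxj, mul_zero]
  refine ENNReal.sum_eq_top.2 ⟨i, Finset.mem_univ _, ENNReal.sum_eq_top.2
    ⟨j, Finset.mem_univ _, ?_⟩⟩
  rw [hW, termDiv, if_neg hM.ne', if_pos rfl]

end Divergence

section Pythagorean

variable {m : ℕ} {M : Fin (2 * m + 1) → Fin (m + 1) → ℝ} {x x' : Fin (m + 1) → ℝ}

lemma IdivMR_Wmat_pythagorean (hM : BandSupported m M) (hx : ∀ j, 0 < x j) (hx' : ∀ j, 0 < x' j)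
    (hYhat : ∀ j, Yhat m (Wmat m x') j = Yhat m M j) :
    IdivMR m M (Wmat m x) = IdivMR m M (Wmat m x') + IdivMR m (Wmat m x') (Wmat m x) := by
  have hdiff : BandSupported m (M - Wmat m x') := fun i j h => by
    simp [hM i j h, bandSupported_Wmat x' i j h]
  have hdefect : IdivMR m M (Wmat m x) - IdivMR m M (Wmat m x') - IdivMR m (Wmat m x') (Wmat m x)
      = ∑ i, ∑ j, (M - Wmat m x') i j * Real.log (Wmat m x' i j / Wmat m x i j) := by
    simp only [IdivMR, ← Finset.sum_sub_distrib]
    refine Finset.sum_congr rfl fun i _ => Finset.sum_congr rfl fun j _ => ?_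
    by_cases h : j.1 ≤ i.1 ∧ i.1 ≤ j.1 + m
    · exact mul_log_div_three_point _ (Wmat_pos hx' h).ne' (Wmat_pos hx h).ne'
    · simp [hM i j h, bandSupported_Wmat x' i j h, bandSupported_Wmat x i j h]
  have hpairing := hdiff.sum_mul_eq_sum_Yhat_mul
      (fun i j => Real.log (Wmat m x' i j / Wmat m x i j)) (fun j => Real.log (x' j / x j))
      fun ℓ j => by
        rw [Wmat_idx, Wmat_idx, ← div_mul_div_comm,
          Real.log_mul (div_pos (hx' ℓ) (hx ℓ)).ne' (div_pos (hx' j) (hx j)).ne']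
  simp only [Yhat_sub, hYhat, sub_self, zero_mul, Finset.sum_const_zero] at hpairing
  linarith

lemma IdivM_Wmat_pythagorean (hM : BandSupported m M) (hM0 : ∀ i j, 0 ≤ M i j)
    (hx : ∀ j, 0 < x j) (hx' : ∀ j, 0 < x' j) (hYhat : ∀ j, Yhat m (Wmat m x') j = Yhat m M j) :
    IdivM m M (Wmat m x) = IdivM m M (Wmat m x') + IdivM m (Wmat m x') (Wmat m x) := by
  have hW' := Wmat_nonneg fun j => (hx' j).le
  have hW := Wmat_nonneg fun j => (hx j).le
  have h₁ := hM.eq_zero_or_Wmat_pos hx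
  have h₂ := hM.eq_zero_or_Wmat_pos hx'
  have h₃ := (bandSupported_Wmat x').eq_zero_or_Wmat_pos hx
  rw [IdivM_eq_ofReal_IdivMR hM0 hW h₁, IdivM_eq_ofReal_IdivMR hM0 hW' h₂,
    IdivM_eq_ofReal_IdivMR hW' hW h₃, IdivMR_Wmat_pythagorean hM hx hx' hYhat,
    ENNReal.ofReal_add (IdivMR_nonneg hM0 hW' h₂) (IdivMR_nonneg hW' hW h₃)]

end Pythagorean

section Minimizer

variable {m : ℕ} {y : Fin (2 * m + 1) → ℝ} {Y : Fin (2 * m + 1) → Fin (m + 1) → ℝ}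

noncomputable def xStar (m : ℕ) (y : Fin (2 * m + 1) → ℝ) (Y : Fin (2 * m + 1) → Fin (m + 1) → ℝ)
    (j : Fin (m + 1)) : ℝ :=
  Yhat m Y j / (2 * Real.sqrt (∑ i, y i))

lemma calY.bandSupported (hY : calY m y Y) : BandSupported m Y :=
  hY.2.1

lemma xStar_pos (hsum : 0 < ∑ i, y i) (hY : ∀ i j, j.1 ≤ i.1 ∧ i.1 ≤ j.1 + m → 0 < Y i j)
    (j : Fin (m + 1)) : 0 < xStar m y Y j :=
  div_pos (Yhat_pos hY j) (by positivity)

lemma sum_xStar (hY : calY m y Y) (hsum : 0 < ∑ i, y i) :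
    ∑ j, xStar m y Y j = Real.sqrt (∑ i, y i) := by
  have hc : 0 < Real.sqrt (∑ i, y i) := Real.sqrt_pos.2 hsum
  have hrows : ∑ i, ∑ j, Y i j = ∑ i, y i := Finset.sum_congr rfl fun i _ => hY.2.2 i
  simp only [xStar]
  rw [← Finset.sum_div, hY.bandSupported.sum_Yhat, hrows]
  field_simp
  exact (Real.sq_sqrt hsum.le).symm

lemma Yhat_Wmat_xStar (hY : calY m y Y) (hsum : 0 < ∑ i, y i) (j : Fin (m + 1)) :
    Yhat m (Wmat m (xStar m y Y)) j = Yhat m Y j := by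
  have hc : 0 < Real.sqrt (∑ i, y i) := Real.sqrt_pos.2 hsum
  rw [Yhat_Wmat, sum_xStar hY hsum, xStar]
  field_simp

end Minimizer

theorem stmt6_general (m : ℕ) (y : Fin (2 * m + 1) → ℝ)
    (hsum : 0 < ∑ i, y i)
    (Y : Fin (2 * m + 1) → Fin (m + 1) → ℝ) (hY : calY m y Y)
    (hYpos : ∀ (i : Fin (2 * m + 1)) (j : Fin (m + 1)),
      j.1 ≤ i.1 ∧ i.1 ≤ j.1 + m → 0 < Y i j) :
    (∀ x : Fin (m + 1) → ℝ, (∀ j, 0 < x j) →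
      IdivM m Y (Wmat m x) =
        IdivM m Y (Wmat m (fun j => Yhat m Y j / (2 * Real.sqrt (∑ i, y i)))) +
          IdivM m (Wmat m (fun j => Yhat m Y j / (2 * Real.sqrt (∑ i, y i)))) (Wmat m x)) ∧
    (∀ x : Fin (m + 1) → ℝ, (∀ j, 0 ≤ x j) →
      IdivM m Y (Wmat m (fun j => Yhat m Y j / (2 * Real.sqrt (∑ i, y i)))) ≤
        IdivM m Y (Wmat m x)) := by
  have pythagorean (x : Fin (m + 1) → ℝ) (hx : ∀ j, 0 < x j) :
      IdivM m Y (Wmat m x) =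
        IdivM m Y (Wmat m (xStar m y Y)) + IdivM m (Wmat m (xStar m y Y)) (Wmat m x) :=
    IdivM_Wmat_pythagorean hY.bandSupported hY.1 hx (xStar_pos hsum hYpos) (Yhat_Wmat_xStar hY hsum)
  refine ⟨pythagorean, fun x hx => ?_⟩
  by_cases hpos : ∀ j, 0 < x j
  · exact (pythagorean x hpos).symm ▸ le_self_add
  · obtain ⟨j, hj⟩ := not_forall.1 hpos
    have hdiag : j.1 ≤ j.1 ∧ j.1 ≤ j.1 + m := ⟨le_rfl, Nat.le_add_right _ _⟩
    rw [IdivM_Wmat_eq_top (i := ⟨j.1, by omega⟩) hdiag (hYpos _ _ hdiag)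
      (le_antisymm (not_lt.1 hj) (hx j))]
    exact le_top

/-- Pythagorean identity for the partial minimization over 𝒲, and
the minimizing property of `W⋆ = W(x⋆)` with `x⋆_j = Ŷ_j/(2√(∑ y_i))`. -/
theorem stmt6 (m : ℕ) (y : Fin (2 * m + 1) → ℝ) (hy : ∀ i, 0 ≤ y i)
    (hsum : 0 < ∑ i, y i)
    (Y : Fin (2 * m + 1) → Fin (m + 1) → ℝ) (hY : calY m y Y)
    (hYpos : ∀ (i : Fin (2 * m + 1)) (j : Fin (m + 1)),
      j.1 ≤ i.1 ∧ i.1 ≤ j.1 + m → 0 < Y i j) :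
    (∀ x : Fin (m + 1) → ℝ, (∀ j, 0 < x j) →
      IdivM m Y (Wmat m x) =
        IdivM m Y (Wmat m (fun j => Yhat m Y j / (2 * Real.sqrt (∑ i, y i)))) +
          IdivM m (Wmat m (fun j => Yhat m Y j / (2 * Real.sqrt (∑ i, y i)))) (Wmat m x)) ∧
    (∀ x : Fin (m + 1) → ℝ, (∀ j, 0 ≤ x j) →
      IdivM m Y (Wmat m (fun j => Yhat m Y j / (2 * Real.sqrt (∑ i, y i)))) ≤
        IdivM m Y (Wmat m x)) :=
  stmt6_general m y hsum Y hY hYpos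
end

section
/- Let y ∈ ℝ₊^{2m+1} with c := √(Σ_{i=0}^{2m} y_i) > 0 and let x ∈ ℝ^{m+1} be strictly positive with Σ_{j=0}^{m} x_j = c. Then the algorithm update can be written in gradient form: T(x)_j = x_j ( 1 − (1/(2c)) ∇_j I(x) ) for every j = 0,…,m, where ∇_j I(x) = 2 Σ_{ℓ=0}^{m} ( x_ℓ − x_ℓ y_{ℓ+j}/(x*x)_{ℓ+j} ). In particular, if ∇_j I(x) = 0 then T(x)_j = x_j, so stationary points of the objective on the simplex are fixed points of the algorithm. -/
open Finset Filter

/-- gradient form of the algorithm update on the simplex: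
`T(x)_j = x_j (1 − (1/(2c)) ∇_j I(x))`; stationary points are fixed points. -/
theorem stmt12 (m : ℕ) (y : Fin (2 * m + 1) → ℝ) (hy : ∀ i, 0 ≤ y i)
    (hc : 0 < Real.sqrt (∑ i, y i))
    (x : Fin (m + 1) → ℝ) (hx : ∀ j, 0 < x j)
    (hsx : ∑ j, x j = Real.sqrt (∑ i, y i)) :
    (∀ j, Tmap m y x j =
      x j * (1 - 1 / (2 * Real.sqrt (∑ i, y i)) * gradI m y x j)) ∧
    (∀ j, gradI m y x j = 0 → Tmap m y x j = x j) := by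
  have hc0 : Real.sqrt (∑ i, y i) ≠ 0 := ne_of_gt hc
  have key : ∀ j, Tmap m y x j =
      x j * (1 - 1 / (2 * Real.sqrt (∑ i, y i)) * gradI m y x j) := by
    intro j
    unfold Tmap gradI
    rw [Finset.sum_sub_distrib, hsx]
    field_simp
    ring
  exact ⟨key, fun j h => by rw [key j, h]; ring⟩
end

section
/- Let c > 0 and let x, x' ∈ ℝ^{m+1} both be strictly positive with Σ_{j=0}^{m} x_j = Σ_{j=0}^{m} x'_j = c. Then the I-divergence between the associated product matrices satisfies I(W(x')‖W(x)) = 2c · I(x'‖x). -/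
open Finset Filter

/-- `I(W(x')‖W(x)) = 2c · I(x'‖x)` for strictly positive `x, x'`
on the simplex with common sum `c > 0`. -/
theorem stmt13 (m : ℕ) (c : ℝ) (hc : 0 < c)
    (x x' : Fin (m + 1) → ℝ) (hx : ∀ j, 0 < x j) (hx' : ∀ j, 0 < x' j)
    (hsx : ∑ j, x j = c) (hsx' : ∑ j, x' j = c) :
    IdivMR m (Wmat m x') (Wmat m x) = 2 * c * IdivR x' x := by
  classical
  set S := ∑ j, x' j * Real.log (x' j / x j) with hS
  have key : ∀ j : Fin (m + 1),
      (∑ i : Fin (2 * m + 1),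
        (Wmat m x' i j * Real.log (Wmat m x' i j / Wmat m x i j)
          - Wmat m x' i j + Wmat m x i j))
      = ∑ ℓ : Fin (m + 1),
        (x' ℓ * x' j * Real.log ((x' ℓ * x' j) / (x ℓ * x j))
          - x' ℓ * x' j + x ℓ * x j) := by
    intro j
    have hinj : Function.Injective (fun ℓ : Fin (m + 1) => idx m ℓ j) := by
      intro a b hab
      have : a.1 + j.1 = b.1 + j.1 := congrArg Fin.val hab
      exact Fin.ext (by omega)
    rw [← Finset.sum_subset (Finset.subset_univ
        (Finset.univ.image (fun ℓ : Fin (m + 1) => idx m ℓ j)))]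
    · rw [Finset.sum_image (fun a _ b _ h => hinj h)]
      refine Finset.sum_congr rfl fun ℓ _ => ?_
      have hsup : j.1 ≤ (idx m ℓ j).1 ∧ (idx m ℓ j).1 ≤ j.1 + m := by
        simp only [idx]; have := ℓ.isLt; omega
      have hw : ∀ z : Fin (m + 1) → ℝ, Wmat m z (idx m ℓ j) j = z ℓ * z j := by
        intro z
        rw [Wmat, dif_pos hsup]
        congr 1
        congr 1
        exact Fin.ext (by simp [idx])
      rw [hw, hw]
    · intro i _ hi
      have hns : ¬(j.1 ≤ i.1 ∧ i.1 ≤ j.1 + m) := by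
        intro h
        apply hi
        refine Finset.mem_image.2 ⟨⟨i.1 - j.1, by omega⟩, Finset.mem_univ _, ?_⟩
        exact Fin.ext (by simp [idx]; omega)
      rw [Wmat, dif_neg hns, Wmat, dif_neg hns]
      simp
  have hIR : IdivR x' x = S := by
    rw [IdivR, hS]
    have : ∑ i, (x' i * Real.log (x' i / x i) - x' i + x i)
        = (∑ i, x' i * Real.log (x' i / x i)) - (∑ i, x' i) + ∑ i, x i := by
      rw [Finset.sum_add_distrib, Finset.sum_sub_distrib]
    rw [this, hsx, hsx']; ring
  rw [IdivMR, Finset.sum_comm]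
  rw [Finset.sum_congr rfl fun j _ => key j]
  have hterm : ∀ ℓ j : Fin (m + 1),
      x' ℓ * x' j * Real.log ((x' ℓ * x' j) / (x ℓ * x j)) - x' ℓ * x' j + x ℓ * x j
      = x' j * (x' ℓ * Real.log (x' ℓ / x ℓ)) + x' ℓ * (x' j * Real.log (x' j / x j))
        - x' ℓ * x' j + x ℓ * x j := by
    intro ℓ j
    have h1 : (x' ℓ * x' j) / (x ℓ * x j) = (x' ℓ / x ℓ) * (x' j / x j) := by
      field_simp
    rw [h1, Real.log_mul (ne_of_gt (div_pos (hx' ℓ) (hx ℓ))) (ne_of_gt (div_pos (hx' j) (hx j)))]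
    ring
  calc (∑ j : Fin (m+1), ∑ ℓ : Fin (m+1),
        (x' ℓ * x' j * Real.log ((x' ℓ * x' j) / (x ℓ * x j)) - x' ℓ * x' j + x ℓ * x j))
      = ∑ j : Fin (m+1), ∑ ℓ : Fin (m+1),
        (x' j * (x' ℓ * Real.log (x' ℓ / x ℓ)) + x' ℓ * (x' j * Real.log (x' j / x j))
          - x' ℓ * x' j + x ℓ * x j) := by
        exact Finset.sum_congr rfl fun j _ => Finset.sum_congr rfl fun ℓ _ => hterm ℓ j
    _ = ∑ j : Fin (m+1), (x' j * S + c * (x' j * Real.log (x' j / x j)) - c * x' j + c * x j) := by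
        refine Finset.sum_congr rfl fun j _ => ?_
        rw [show (fun ℓ => x' j * (x' ℓ * Real.log (x' ℓ / x ℓ))
            + x' ℓ * (x' j * Real.log (x' j / x j)) - x' ℓ * x' j + x ℓ * x j)
          = (fun ℓ => (x' j * (x' ℓ * Real.log (x' ℓ / x ℓ))
            + x' ℓ * (x' j * Real.log (x' j / x j))) - (x' ℓ * x' j - x ℓ * x j)) from
          funext fun ℓ => by ring]
        simp only [Finset.sum_sub_distrib, Finset.sum_add_distrib, ← Finset.mul_sum,
          ← Finset.sum_mul]
        rw [hsx, hsx', ← hS]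
        ring
    _ = 2 * c * IdivR x' x := by
        rw [hIR]
        simp only [Finset.sum_sub_distrib, Finset.sum_add_distrib, ← Finset.mul_sum,
          ← Finset.sum_mul]
        rw [hsx, hsx', ← hS]
        ring
end
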